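/- Let α > 0 and let m ≥ 1 be an integer. Then m^{α} · ∑_{n=m+1}^∞ n^{−α−1} ≤ 1/α − 1/(2m) + (α+1)/(12m²). -/

import Mathlib

/-! Let `F(x) = x^{-α} (1/α - 1/(2x) + (α+1)/(12x²))`, the Euler–Maclaurin approximation
`∫_x^∞ f - f(x)/2 - f'(x)/12` of `∑_{n>x} f(n)` for `f(t) = t^{-α-1}`. Each term satisfies
`(x+1)^{-α-1} ≤ F(x) - F(x+1)` and `F ≥ 0`, so the tail telescopes to at most `F(m)`, and
`m^α F(m)` is the right-hand side. Substituting `u = 1/x` turns the one-step defect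
`x^α (F(x) - F(x+1) - (x+1)^{-α-1})` into a function of `u ≥ 0` that vanishes to second order
at `u = 0` and has a nonnegative third derivative. -/

open Real Set

noncomputable def tailApprox (α x : ℝ) : ℝ :=
  x ^ (-α) * (1 / α - 1 / (2 * x) + (α + 1) / (12 * x ^ 2))

noncomputable def stepDefect (α u : ℝ) : ℝ :=
  1 / α - 1 / 2 * u + (α + 1) / 12 * u ^ 2 - 1 / α * (1 + u) ^ (-α)
    - 1 / 2 * (u * (1 + u) ^ (-α - 1)) - (α + 1) / 12 * (u ^ 2 * (1 + u) ^ (-α - 2))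

noncomputable def stepDefect₁ (α u : ℝ) : ℝ :=
  -(1 / 2) + (α + 1) / 6 * u + 1 / 2 * (1 + u) ^ (-α - 1)
    + (α + 1) / 3 * (u * (1 + u) ^ (-α - 2)) + (α + 1) * (α + 2) / 12 * (u ^ 2 * (1 + u) ^ (-α - 3))

noncomputable def stepDefect₂ (α u : ℝ) : ℝ :=
  (α + 1) / 6 - (α + 1) / 6 * (1 + u) ^ (-α - 2)
    - (α + 1) * (α + 2) / 6 * (u * (1 + u) ^ (-α - 3))
    - (α + 1) * (α + 2) * (α + 3) / 12 * (u ^ 2 * (1 + u) ^ (-α - 4))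

noncomputable def stepDefect₃ (α u : ℝ) : ℝ :=
  (α + 1) * (α + 2) * (α + 3) * (α + 4) / 12 * (u ^ 2 * (1 + u) ^ (-α - 5))

theorem hasDerivAt_one_add_rpow (c : ℝ) {u : ℝ} (hu : 0 < 1 + u) :
    HasDerivAt (fun x : ℝ => (1 + x) ^ c) (c * (1 + u) ^ (c - 1)) u := by
  simpa using ((hasDerivAt_id u).const_add 1).rpow_const (p := c) (Or.inl hu.ne')

theorem hasDerivAt_stepDefect {α : ℝ} (hα : α ≠ 0) {u : ℝ} (hu : 0 < 1 + u) :
    HasDerivAt (stepDefect α) (stepDefect₁ α u) u := by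
  have h₀ := hasDerivAt_one_add_rpow (-α) hu
  have h₁ := (hasDerivAt_id u).mul (hasDerivAt_one_add_rpow (-α - 1) hu)
  have h₂ := (hasDerivAt_pow 2 u).mul (hasDerivAt_one_add_rpow (-α - 2) hu)
  refine ((((((hasDerivAt_const u _).sub ((hasDerivAt_id u).const_mul (1 / 2))).add
    ((hasDerivAt_pow 2 u).const_mul ((α + 1) / 12))).sub (h₀.const_mul (1 / α))).sub
    (h₁.const_mul (1 / 2))).sub (h₂.const_mul ((α + 1) / 12))).congr_deriv ?_
  simp only [stepDefect₁, id]
  field_simp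
  ring_nf

theorem hasDerivAt_stepDefect₁ (α : ℝ) {u : ℝ} (hu : 0 < 1 + u) :
    HasDerivAt (stepDefect₁ α) (stepDefect₂ α u) u := by
  have h₁ := hasDerivAt_one_add_rpow (-α - 1) hu
  have h₂ := (hasDerivAt_id u).mul (hasDerivAt_one_add_rpow (-α - 2) hu)
  have h₃ := (hasDerivAt_pow 2 u).mul (hasDerivAt_one_add_rpow (-α - 3) hu)
  refine (((((hasDerivAt_const u _).add ((hasDerivAt_id u).const_mul ((α + 1) / 6))).add
    (h₁.const_mul (1 / 2))).add (h₂.const_mul ((α + 1) / 3))).add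
    (h₃.const_mul ((α + 1) * (α + 2) / 12))).congr_deriv ?_
  simp only [stepDefect₂, id]
  ring_nf

theorem hasDerivAt_stepDefect₂ (α : ℝ) {u : ℝ} (hu : 0 < 1 + u) :
    HasDerivAt (stepDefect₂ α) (stepDefect₃ α u) u := by
  have h₂ := hasDerivAt_one_add_rpow (-α - 2) hu
  have h₃ := (hasDerivAt_id u).mul (hasDerivAt_one_add_rpow (-α - 3) hu)
  have h₄ := (hasDerivAt_pow 2 u).mul (hasDerivAt_one_add_rpow (-α - 4) hu)
  refine ((((hasDerivAt_const u _).sub (h₂.const_mul ((α + 1) / 6))).sub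
    (h₃.const_mul ((α + 1) * (α + 2) / 6))).sub
    (h₄.const_mul ((α + 1) * (α + 2) * (α + 3) / 12))).congr_deriv ?_
  simp only [stepDefect₃, id]
  ring_nf

theorem nonneg_of_hasDerivAt_nonneg {f f' : ℝ → ℝ} (hf : ∀ x, 0 ≤ x → HasDerivAt f (f' x) x)
    (hf₀ : f 0 = 0) (hf' : ∀ x, 0 ≤ x → 0 ≤ f' x) {u : ℝ} (hu : 0 ≤ u) : 0 ≤ f u := by
  have hmono : MonotoneOn f (Ici 0) := by
    refine monotoneOn_of_hasDerivWithinAt_nonneg (f' := f') (convex_Ici 0)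
      (fun x hx => (hf x hx).continuousAt.continuousWithinAt) (fun x hx => ?_) (fun x hx => ?_)
    · rw [interior_Ici] at hx
      exact (hf x (le_of_lt hx)).hasDerivWithinAt
    · rw [interior_Ici] at hx
      exact hf' x (le_of_lt hx)
  simpa [hf₀] using hmono self_mem_Ici hu hu

theorem stepDefect₃_nonneg {α : ℝ} (hα : -1 ≤ α) {u : ℝ} (hu : 0 ≤ u) : 0 ≤ stepDefect₃ α u := by
  have hc : 0 ≤ (α + 1) * (α + 2) * (α + 3) * (α + 4) := by
    apply_rules [mul_nonneg] <;> linarith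
  exact mul_nonneg (by positivity) (mul_nonneg (sq_nonneg u) (rpow_nonneg (by linarith) _))

theorem stepDefect₂_nonneg {α : ℝ} (hα : -1 ≤ α) {u : ℝ} (hu : 0 ≤ u) : 0 ≤ stepDefect₂ α u :=
  nonneg_of_hasDerivAt_nonneg (fun x hx => hasDerivAt_stepDefect₂ α (by linarith))
    (by simp [stepDefect₂]) (fun _ hx => stepDefect₃_nonneg hα hx) hu

theorem stepDefect₁_nonneg {α : ℝ} (hα : -1 ≤ α) {u : ℝ} (hu : 0 ≤ u) : 0 ≤ stepDefect₁ α u :=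
  nonneg_of_hasDerivAt_nonneg (fun x hx => hasDerivAt_stepDefect₁ α (by linarith))
    (by norm_num [stepDefect₁]) (fun _ hx => stepDefect₂_nonneg hα hx) hu

theorem stepDefect_nonneg {α : ℝ} (hα : -1 ≤ α) (hα₀ : α ≠ 0) {u : ℝ} (hu : 0 ≤ u) :
    0 ≤ stepDefect α u :=
  nonneg_of_hasDerivAt_nonneg (fun x hx => hasDerivAt_stepDefect hα₀ (by linarith))
    (by norm_num [stepDefect]) (fun _ hx => stepDefect₁_nonneg hα hx) hu

theorem rpow_neg_mul_stepDefect_inv {α x : ℝ} (hx : 0 < x) :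
    x ^ (-α) * stepDefect α x⁻¹
      = tailApprox α x - tailApprox α (x + 1) - (x + 1) ^ (-α - 1) := by
  have hx₁ : 0 < x + 1 := by linarith
  have hinv : 1 + x⁻¹ = (x + 1) / x := by field_simp
  rw [stepDefect, tailApprox, tailApprox, hinv]
  simp only [div_rpow hx₁.le hx.le, rpow_sub hx, rpow_sub hx₁, rpow_one, rpow_two]
  have hpow : x ^ (-α) ≠ 0 := (rpow_pos_of_pos hx _).ne'
  field_simp
  ring

theorem tailApprox_nonneg {α x : ℝ} (hα : 0 < α) (hx : 0 < x) : 0 ≤ tailApprox α x := by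
  have hquad : 1 / α - 1 / (2 * x) + (α + 1) / (12 * x ^ 2)
      = ((α / x - 3) ^ 2 + 3 + α / x ^ 2) / (12 * α) := by
    field_simp; ring
  rw [tailApprox, hquad]
  positivity

theorem rpow_mul_tailApprox {α x : ℝ} (hx : 0 < x) :
    x ^ α * tailApprox α x = 1 / α - 1 / (2 * x) + (α + 1) / (12 * x ^ 2) := by
  rw [tailApprox, ← mul_assoc, ← rpow_add hx, add_neg_cancel, rpow_zero, one_mul]

theorem rpow_le_tailApprox_sub_tailApprox_add_one {α x : ℝ} (hα : -1 ≤ α) (hα₀ : α ≠ 0)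
    (hx : 0 < x) : (x + 1) ^ (-α - 1) ≤ tailApprox α x - tailApprox α (x + 1) := by
  have h := mul_nonneg (rpow_nonneg hx.le (-α)) (stepDefect_nonneg hα hα₀ (inv_nonneg.2 hx.le))
  rw [rpow_neg_mul_stepDefect_inv hx] at h
  linarith

theorem tsum_le_of_le_sub_succ {f H : ℕ → ℝ} (hf : ∀ n, 0 ≤ f n) (hH : ∀ n, 0 ≤ H n)
    (h : ∀ n, f n ≤ H n - H (n + 1)) : ∑' n, f n ≤ H 0 :=
  Real.tsum_le_of_sum_range_le hf fun N =>
    calc ∑ n ∈ Finset.range N, f n ≤ ∑ n ∈ Finset.range N, (H n - H (n + 1)) :=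
          Finset.sum_le_sum fun n _ => h n
      _ = H 0 - H N := Finset.sum_range_sub' H N
      _ ≤ H 0 := sub_le_self _ (hH N)

theorem tail_sum_upper_bound (α : ℝ) (hα : 0 < α) (m : ℕ+) :
    (m : ℝ) ^ α * ∑' k : ℕ, ((m : ℝ) + 1 + (k : ℝ)) ^ (-α - 1)
      ≤ 1/α - 1/(2*(m : ℝ)) + (α + 1)/(12*(m : ℝ)^2) := by
  have hm : (0 : ℝ) < m := by positivity
  have htail : ∑' k : ℕ, ((m : ℝ) + 1 + k) ^ (-α - 1) ≤ tailApprox α (m + (0 : ℕ)) := by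
    refine tsum_le_of_le_sub_succ (H := fun k : ℕ => tailApprox α (m + k))
      (fun k => by positivity) (fun k => tailApprox_nonneg hα (by positivity)) fun k => ?_
    have h := rpow_le_tailApprox_sub_tailApprox_add_one (by linarith) hα.ne'
      (add_pos_of_pos_of_nonneg hm k.cast_nonneg)
    simpa only [Nat.cast_add_one, add_assoc, add_comm (1 : ℝ)] using h
  rw [Nat.cast_zero, add_zero] at htail
  calc (m : ℝ) ^ α * ∑' k : ℕ, ((m : ℝ) + 1 + (k : ℝ)) ^ (-α - 1)
      ≤ (m : ℝ) ^ α * tailApprox α m := by gcongr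
    _ = 1/α - 1/(2*(m : ℝ)) + (α + 1)/(12*(m : ℝ)^2) := rpow_mul_tailApprox hm
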